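/- In a minimal block (tranca mínima), if at some turn a player of the losing team passes at a moment when the two open ends of the chain are two distinct nonzero values, then the losing team plays at least one tile during the game. -/

import Mathlib

/-- A domino tile is an unordered pair of values in `{0,…,6}`. -/
abbrev Tile := Sym2 (Fin 7)

/-- The pip sum of the tile `[a,b]` is `a + b`. -/
def pips (t : Tile) : ℕ :=
  Sym2.lift ⟨fun (a b : Fin 7) => (a : ℕ) + (b : ℕ), fun a b => Nat.add_comm a b⟩ t

/-- The board: the chain of already played tiles, as a list of oriented tiles
concatenated left to right (consecutive tiles match end to end). -/
abbrev Board := List (Fin 7 × Fin 7)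

/-- The total pip sum of the tiles on a board. -/
def boardPips (b : Board) : ℕ := (b.map fun p => (p.1 : ℕ) + (p.2 : ℕ)).sum

/-- A tile `t` can extend a (nonempty) board `b` when `t` contains one of the two
open ends of `b`. -/
def canExtend (b : Board) (t : Tile) : Prop :=
  b ≠ [] ∧ (b.head!.1 ∈ t ∨ b.getLast!.2 ∈ t)

/-- The total pip sum of a hand of tiles. -/
def handPips (h : Finset Tile) : ℕ := ∑ t ∈ h, pips t

/-- A game state: the board of already played tiles, the four remaining hands, and
whose turn it is. -/
structure GState where
  board : Board
  hands : Fin 4 → Finset Tile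
  turn : Fin 4

/-- Players `0` and `2` form team `false`; players `1` and `3` form team `true`. -/
def playerTeam (i : Fin 4) : Bool := decide ((i : ℕ) % 2 = 1)

/-- The total pip sum remaining in the hands of the two players of a team. -/
def GState.teamPips (s : GState) (tm : Bool) : ℕ :=
  if tm then handPips (s.hands 1) + handPips (s.hands 3)
  else handPips (s.hands 0) + handPips (s.hands 2)

/-- A single legal move of the game (the game is still running, i.e. all hands are
nonempty).  The player to move either plays a tile from their hand — the first tile
played starts the chain, and every later tile is appended, suitably oriented, to one
of the two open ends of the chain — or passes, which is permitted only if no tile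
remaining in their hand contains either open end of the chain. -/
inductive Step : GState → GState → Prop
  | playFirst (s : GState) (p : Fin 7 × Fin 7)
      (hrun : ∀ i, s.hands i ≠ ∅)
      (hb : s.board = [])
      (ht : Sym2.mk p.1 p.2 ∈ s.hands s.turn) :
      Step s ⟨[p],
        Function.update s.hands s.turn ((s.hands s.turn).erase (Sym2.mk p.1 p.2)),
        s.turn + 1⟩
  | playLeft (s : GState) (p : Fin 7 × Fin 7)
      (hrun : ∀ i, s.hands i ≠ ∅)
      (hb : s.board ≠ [])
      (ht : Sym2.mk p.1 p.2 ∈ s.hands s.turn)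
      (hfit : p.2 = s.board.head!.1) :
      Step s ⟨p :: s.board,
        Function.update s.hands s.turn ((s.hands s.turn).erase (Sym2.mk p.1 p.2)),
        s.turn + 1⟩
  | playRight (s : GState) (p : Fin 7 × Fin 7)
      (hrun : ∀ i, s.hands i ≠ ∅)
      (hb : s.board ≠ [])
      (ht : Sym2.mk p.1 p.2 ∈ s.hands s.turn)
      (hfit : p.1 = s.board.getLast!.2) :
      Step s ⟨s.board ++ [p],
        Function.update s.hands s.turn ((s.hands s.turn).erase (Sym2.mk p.1 p.2)),
        s.turn + 1⟩
  | pass (s : GState)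
      (hrun : ∀ i, s.hands i ≠ ∅)
      (hb : s.board ≠ [])
      (hcant : ∀ t ∈ s.hands s.turn, ¬ canExtend s.board t) :
      Step s ⟨s.board, s.hands, s.turn + 1⟩

/-- A four-player partnership domino game: a partition of the 28 domino tiles into
four initial hands of 7 tiles each, together with a legal play sequence of states;
player 1 (index `0`) moves first, and players move cyclically. -/
structure Game where
  initHands : Fin 4 → Finset Tile
  card_initHands : ∀ i, (initHands i).card = 7
  disj_initHands : ∀ i j, i ≠ j → Disjoint (initHands i) (initHands j)
  cover_initHands : ∀ t : Tile, ∃ i, t ∈ initHands i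
  states : List GState
  states_ne : states ≠ []
  head_states : states.head states_ne = ⟨[], initHands, 0⟩
  chain_states : states.Chain' Step

/-- The final position of a game. -/
def Game.finalState (g : Game) : GState := g.states.getLast g.states_ne

/-- A position is blocked if at least one tile has been played and no player's
remaining hand contains a tile containing either open end of the chain. -/
def IsBlocked (s : GState) : Prop :=
  s.board ≠ [] ∧ ∀ i : Fin 4, ∀ t ∈ s.hands i, ¬ canExtend s.board t

/-- A game ends blocked if its final position is blocked. -/
def Game.EndsBlocked (g : Game) : Prop := IsBlocked g.finalState

/-- Team `tm` plays at least one tile during the game: at some turn the player to move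
belongs to team `tm` and the board changes (a tile is placed). -/
def Game.teamPlays (g : Game) (tm : Bool) : Prop :=
  ∃ (i : ℕ) (h : i + 1 < g.states.length),
    playerTeam ((g.states.get ⟨i, by omega⟩).turn) = tm ∧
    (g.states.get ⟨i + 1, h⟩).board ≠ (g.states.get ⟨i, by omega⟩).board

/-!
Suppose the passing player's team never places a tile. Player 1 places the first tile, so this
is the team of players 2 and 4, and it keeps all 14 of its tiles. Every value occurs an even
number of times on a chain, except at its two ends; hence a blocked chain of pip sum 42 has both
ends 0, contains the seven tiles with a 0 and exactly two occurrences of every other value. So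
exactly three played tiles avoid 0, and at least two of them avoid any given nonzero value `e`.
The passing player avoids both ends `e` and `e'`, and two turns later the partner is stuck against a
chain still showing `e` or `e'`; both also avoid the final end 0. Thus 14 unplayed tiles avoid
0 and a common nonzero value, but only `15 - 2 = 13` unplayed tiles do.
-/

open Finset Fin.NatCast

def tileCount (v : Fin 7) (t : Tile) : ℕ :=
  Sym2.lift ⟨fun a b => (if a = v then 1 else 0) + (if b = v then 1 else 0),
    fun _ _ => Nat.add_comm _ _⟩ t

theorem tileCount_mk (v a b : Fin 7) :
    tileCount v s(a, b) = (if a = v then 1 else 0) + (if b = v then 1 else 0) := rfl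

theorem mem_iff_tileCount_pos : ∀ (v : Fin 7) (t : Tile), v ∈ t ↔ 0 < tileCount v t := by
  decide

theorem sum_tileCount_univ : ∀ v : Fin 7, ∑ t : Tile, tileCount v t = 8 := by decide

theorem sum_tileCount_values : ∀ t : Tile, ∑ v : Fin 7, tileCount v t = 2 := by decide

theorem pips_eq_sum_mul_tileCount :
    ∀ t : Tile, pips t = ∑ v : Fin 7, (v : ℕ) * tileCount v t := by
  decide

theorem sum_tileCount_filter_zero_mem :
    ∀ v : Fin 7, v ≠ 0 →
      ∑ t ∈ univ.filter (fun t : Tile => 0 ∈ t), tileCount v t = 1 := by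
  decide

theorem card_filter_zero_notMem_notMem :
    ∀ e : Fin 7, e ≠ 0 → #(univ.filter fun t : Tile => 0 ∉ t ∧ e ∉ t) = 15 := by
  decide

theorem sum_mul_ite_eight_two :
    ∀ a : Fin 7, ∑ v : Fin 7, (v : ℕ) * (if v = a then 8 else 2) = 42 + 6 * a := by
  decide

def valueCount (P : Finset Tile) (v : Fin 7) : ℕ := ∑ t ∈ P, tileCount v t

section ValueCount

variable {P : Finset Tile}

theorem valueCount_eq_eight {v : Fin 7} (h : ∀ t : Tile, v ∈ t → t ∈ P) :
    valueCount P v = 8 := by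
  unfold valueCount
  rw [← sum_tileCount_univ v]
  refine sum_subset (subset_univ _) fun t _ ht => ?_
  by_contra hpos
  exact ht (h t ((mem_iff_tileCount_pos v t).2 (Nat.pos_of_ne_zero hpos)))

theorem tileCount_le_valueCount {v : Fin 7} {t : Tile} (ht : t ∈ P) :
    tileCount v t ≤ valueCount P v :=
  single_le_sum (fun _ _ => Nat.zero_le _) ht

theorem card_filter_mem_le_valueCount (v : Fin 7) : #(P.filter (v ∈ ·)) ≤ valueCount P v := by
  calc #(P.filter (v ∈ ·)) = ∑ t ∈ P.filter (v ∈ ·), 1 := card_eq_sum_ones _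
    _ ≤ ∑ t ∈ P.filter (v ∈ ·), tileCount v t :=
        sum_le_sum fun t ht => (mem_iff_tileCount_pos v t).1 (mem_filter.1 ht).2
    _ ≤ valueCount P v := sum_le_sum_of_subset (filter_subset _ _)

theorem sum_valueCount (P : Finset Tile) : ∑ v, valueCount P v = 2 * #P := by
  simp only [valueCount]
  rw [sum_comm, card_eq_sum_ones, mul_sum]
  simp only [sum_tileCount_values, mul_one]

theorem sum_pips_eq_sum_mul_valueCount (P : Finset Tile) :
    ∑ t ∈ P, pips t = ∑ v : Fin 7, (v : ℕ) * valueCount P v := by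
  simp only [valueCount, mul_sum, pips_eq_sum_mul_tileCount]
  exact sum_comm

/-- The end value occurs 8 times and every other value at least twice, so the pip sum gives
`42 ≥ 8a + 2(21 - a)`. -/
theorem ends_eq_zero_of_sum_pips_eq (a b : Fin 7)
    (hpar : ∀ v, Even (valueCount P v + (if a = v then 1 else 0) + (if b = v then 1 else 0)))
    (hclosed : ∀ t : Tile, a ∈ t ∨ b ∈ t → t ∈ P) (hpips : ∑ t ∈ P, pips t = 42) :
    a = 0 ∧ b = 0 ∧ ∀ v, v ≠ 0 → valueCount P v = 2 := by
  have hend : valueCount P a = 8 := valueCount_eq_eight fun t ht => hclosed t (.inl ht)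
  have hba : b = a := by
    by_contra hba
    have := hpar a
    simp only [hend, if_neg hba, ↓reduceIte] at this
    exact absurd this (by decide)
  subst hba
  have hlower : ∀ v, (if v = b then 8 else 2) ≤ valueCount P v := by
    intro v
    split_ifs with hv
    · rw [hv, hend]
    · have hmem : s(b, v) ∈ P := hclosed _ (.inl (Sym2.mem_mk_left b v))
      have hpos := tileCount_le_valueCount (v := v) hmem
      have hodd := hpar v
      simp only [tileCount_mk, if_neg (Ne.symm hv), ↓reduceIte] at hpos hodd
      obtain ⟨r, hr⟩ := hodd
      omega
  have hterm : ∀ v ∈ (univ : Finset (Fin 7)),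
      (v : ℕ) * (if v = b then 8 else 2) ≤ v * valueCount P v :=
    fun v _ => Nat.mul_le_mul_left _ (hlower v)
  have hsum : ∑ v : Fin 7, (v : ℕ) * valueCount P v = 42 := by
    rw [← sum_pips_eq_sum_mul_valueCount, hpips]
  have hle := sum_le_sum hterm
  rw [sum_mul_ite_eight_two, hsum] at hle
  have hb : b = 0 := Fin.ext (by omega)
  subst hb
  refine ⟨rfl, rfl, fun v hv => ?_⟩
  have heq := (sum_eq_sum_iff_of_le hterm).1 (by rw [sum_mul_ite_eight_two, hsum]; rfl) v
    (mem_univ v)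
  rw [if_neg hv] at heq
  exact (Nat.eq_of_mul_eq_mul_left (Nat.pos_of_ne_zero (Fin.val_ne_of_ne hv)) heq).symm

theorem two_le_card_filter_zero_notMem_notMem {e : Fin 7} (he : e ≠ 0)
    (hzero : ∀ t : Tile, 0 ∈ t → t ∈ P) (htwo : ∀ v, v ≠ 0 → valueCount P v = 2) :
    2 ≤ #(P.filter fun t => 0 ∉ t ∧ e ∉ t) := by
  set Q := P.filter fun t => 0 ∉ t
  have hZ : P.filter (0 ∈ ·) = univ.filter (0 ∈ ·) := by
    ext t
    simpa using hzero t
  have hsplit : ∀ v, valueCount P v = valueCount (univ.filter (0 ∈ ·)) v + valueCount Q v := by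
    intro v
    unfold valueCount
    rw [← hZ, sum_filter_add_sum_filter_not]
  have hQ : ∀ v, v ≠ 0 → valueCount Q v = 1 := by
    intro v hv
    have := hsplit v
    rw [htwo v hv, valueCount, sum_tileCount_filter_zero_mem v hv] at this
    omega
  have hQ0 : valueCount Q 0 = 0 :=
    sum_eq_zero fun t ht => by
      by_contra h
      exact (mem_filter.1 ht).2 ((mem_iff_tileCount_pos 0 t).2 (Nat.pos_of_ne_zero h))
  have hcard : #Q = 3 := by
    have := sum_valueCount Q
    rw [Fin.sum_univ_succ, hQ0, sum_congr rfl fun i _ => hQ i.succ (Fin.succ_ne_zero i)] at this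
    simp only [sum_const, card_univ, Fintype.card_fin, smul_eq_mul] at this
    omega
  have he1 := card_filter_mem_le_valueCount (P := Q) e
  rw [hQ e he] at he1
  have := card_filter_add_card_filter_not (s := Q) (e ∈ ·)
  simp only [Q, filter_filter] at this he1 hcard ⊢
  omega

theorem card_le_thirteen_of_disjoint {H P : Finset Tile} {e : Fin 7} (he : e ≠ 0)
    (hH : ∀ t ∈ H, 0 ∉ t ∧ e ∉ t) (hdisj : Disjoint H P)
    (hP : 2 ≤ #(P.filter fun t => 0 ∉ t ∧ e ∉ t)) : #H ≤ 13 := by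
  have hsub :
      H ∪ P.filter (fun t => 0 ∉ t ∧ e ∉ t) ⊆ univ.filter fun t => 0 ∉ t ∧ e ∉ t :=
    union_subset (fun t ht => mem_filter.2 ⟨mem_univ t, hH t ht⟩)
      (filter_subset_filter _ (subset_univ P))
  have hcard := card_le_card hsub
  rw [card_union_of_disjoint (hdisj.mono_right (filter_subset _ _)),
    card_filter_zero_notMem_notMem e he] at hcard
  omega

end ValueCount

def tilesOf (b : Board) : List Tile := b.map fun p => s(p.1, p.2)

theorem List.getLast!_cons_of_ne_nil {α : Type*} [Inhabited α] (a : α) {l : List α}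
    (hl : l ≠ []) :
    (a :: l).getLast! = l.getLast! := by
  cases l with
  | nil => exact absurd rfl hl
  | cons b l => rfl

theorem boardPips_eq_sum_pips (b : Board) : boardPips b = ((tilesOf b).map pips).sum := by
  simp only [boardPips, tilesOf, List.map_map]
  rfl

theorem even_sum_tileCount_add_ends (v : Fin 7) :
    ∀ b : Board, b ≠ [] → b.IsChain (fun p q => p.2 = q.1) →
      Even (((tilesOf b).map (tileCount v)).sum
        + (if b.head!.1 = v then 1 else 0) + (if b.getLast!.2 = v then 1 else 0))
  | [p], _, _ => ⟨tileCount v s(p.1, p.2), by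
      rw [List.head!_cons, show [p].getLast! = p from rfl]
      simp only [tilesOf, List.map_cons, List.map_nil, List.sum_cons, List.sum_nil, tileCount_mk]
      omega⟩
  | p :: q :: l, _, hchain => by
    obtain ⟨hpq, hrest⟩ := List.isChain_cons_cons.1 hchain
    obtain ⟨r, hr⟩ := even_sum_tileCount_add_ends v (q :: l) (List.cons_ne_nil q l) hrest
    refine ⟨r + if p.1 = v then 1 else 0, ?_⟩
    rw [List.head!_cons] at hr ⊢
    rw [List.getLast!_cons_of_ne_nil p (List.cons_ne_nil q l)]
    simp only [tilesOf, List.map_cons, List.sum_cons, tileCount_mk, hpq] at hr ⊢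
    omega

theorem notMem_of_not_canExtend {b : Board} {t : Tile} (hb : b ≠ []) (h : ¬ canExtend b t) :
    b.head!.1 ∉ t ∧ b.getLast!.2 ∉ t := by
  simpa [canExtend, hb, not_or] using h

theorem Finset.cons_sum_update_erase {ι α : Type*} [Fintype ι] [DecidableEq ι] [DecidableEq α]
    (h : ι → Finset α) (k : ι) {a : α} (ha : a ∈ h k) :
    a ::ₘ ∑ j, (Function.update h k ((h k).erase a) j).val = ∑ j, (h j).val := by
  rw [← add_sum_erase _ _ (mem_univ k), ← add_sum_erase _ _ (mem_univ k), Function.update_self,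
    ← Multiset.cons_add, erase_val, Multiset.cons_erase (mem_def.1 ha)]
  congr 1
  exact sum_congr rfl fun j hj => by rw [Function.update_of_ne (ne_of_mem_erase hj)]

def GState.Conserved (s : GState) : Prop :=
  (tilesOf s.board : Multiset Tile) + ∑ j, (s.hands j).val = (univ : Finset Tile).val

namespace GState.Conserved

variable {s : GState} (hs : s.Conserved)
include hs

theorem play {t : Tile} (ht : t ∈ s.hands s.turn) {b : Board}
    (hb : (tilesOf b : Multiset Tile) = t ::ₘ tilesOf s.board) (k : Fin 4) :
    GState.Conserved ⟨b, Function.update s.hands s.turn ((s.hands s.turn).erase t), k⟩ := by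
  rw [GState.Conserved, hb, Multiset.cons_add, ← Multiset.add_cons,
    cons_sum_update_erase _ _ ht]
  exact hs

theorem nodup : (tilesOf s.board).Nodup :=
  Multiset.coe_nodup.1 (Multiset.nodup_of_le (Multiset.le_add_right _ _) (hs ▸ univ.nodup))

theorem notMem_hands {t : Tile} (ht : t ∈ tilesOf s.board) (j : Fin 4) : t ∉ s.hands j := by
  have hle : (tilesOf s.board : Multiset Tile) + (s.hands j).val ≤ univ.val :=
    hs ▸ (add_le_add_iff_left _).2 (single_le_sum (fun _ _ => Multiset.zero_le _) (mem_univ j))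
  exact Multiset.disjoint_left.1 (Multiset.nodup_add.1 (Multiset.nodup_of_le hle univ.nodup)).2.2
    (Multiset.mem_coe.2 ht)

theorem mem_tilesOf_or_mem_hands (t : Tile) : t ∈ tilesOf s.board ∨ ∃ j, t ∈ s.hands j := by
  have ht : t ∈ (univ : Finset Tile).val := mem_univ t
  rw [← hs, Multiset.mem_add, Multiset.mem_sum] at ht
  simpa using ht

end GState.Conserved

namespace Step

variable {s s' : GState}

theorem turn_eq (h : Step s s') : s'.turn = s.turn + 1 := by
  cases h <;> rfl

theorem conserved (h : Step s s') (hs : s.Conserved) : s'.Conserved := by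
  cases h with
  | playFirst p _ hb ht => exact hs.play ht (by simp [tilesOf, hb]) _
  | playLeft p _ _ ht _ => exact hs.play ht (by simp [tilesOf]) _
  | playRight p _ _ ht _ => exact hs.play ht (by simp [tilesOf]) _
  | pass => exact hs

theorem isChain (h : Step s s') (hs : s.board.IsChain fun p q => p.2 = q.1) :
    s'.board.IsChain fun p q => p.2 = q.1 := by
  cases h with
  | playFirst p => exact List.isChain_singleton p
  | playLeft p _ hb _ hfit =>
    obtain ⟨q, l, hql⟩ := List.exists_cons_of_ne_nil hb
    rw [hql] at hs hfit ⊢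
    exact List.isChain_cons_cons.2 ⟨hfit, hs⟩
  | playRight p _ hb _ hfit =>
    refine List.isChain_append.2 ⟨hs, List.isChain_singleton p, fun x hx y hy => ?_⟩
    rw [List.head?_cons, Option.mem_some_iff] at hy
    rw [← hy, hfit, List.getLast!_of_getLast? hx]
  | pass => exact hs

theorem board_ne_nil (h : Step s s') : s'.board ≠ [] := by
  cases h <;> simp_all

theorem hands_of_ne_turn (h : Step s s') {j : Fin 4} (hj : j ≠ s.turn) :
    s'.hands j = s.hands j := by
  cases h <;> first | rfl | exact Function.update_of_ne hj _ _

theorem pass_of_board_eq (h : Step s s') (hb : s'.board = s.board) :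
    s'.hands = s.hands ∧ ∀ t ∈ s.hands s.turn, ¬ canExtend s.board t := by
  cases h with
  | playFirst p _ hb₀ => simp [hb₀] at hb
  | playLeft p => exact absurd hb (List.cons_ne_self p _)
  | playRight p => simpa using congrArg List.length hb
  | pass _ _ hcant => exact ⟨rfl, hcant⟩

theorem ends_eq (h : Step s s') (hb : s.board ≠ []) :
    s'.board.head!.1 = s.board.head!.1 ∨ s'.board.getLast!.2 = s.board.getLast!.2 := by
  cases h with
  | playFirst _ _ hb₀ => exact absurd hb₀ hb
  | playLeft p => exact .inr (by dsimp only; rw [List.getLast!_cons_of_ne_nil p hb])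
  | playRight p => exact .inl (by dsimp only; rw [List.head!_append _ hb])
  | pass => exact .inl rfl

end Step

theorem GState.Conserved.head_eq_zero_of_minimal_block {s : GState} (hs : s.Conserved)
    (hchain : s.board.IsChain fun p q => p.2 = q.1) (hblk : IsBlocked s)
    (hpips : boardPips s.board = 42) :
    s.board.head!.1 = 0 ∧
      ∀ e, e ≠ 0 →
        2 ≤ #((tilesOf s.board).toFinset.filter fun t => 0 ∉ t ∧ e ∉ t) := by
  set P := (tilesOf s.board).toFinset
  have hsum : ∀ f : Tile → ℕ, ∑ t ∈ P, f t = ((tilesOf s.board).map f).sum :=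
    fun f => List.sum_toFinset f hs.nodup
  have hclosed : ∀ t : Tile, s.board.head!.1 ∈ t ∨ s.board.getLast!.2 ∈ t → t ∈ P := by
    intro t ht
    rcases hs.mem_tilesOf_or_mem_hands t with hP | ⟨j, hj⟩
    · exact List.mem_toFinset.2 hP
    · exact absurd ⟨hblk.1, ht⟩ (hblk.2 j t hj)
  obtain ⟨ha, -, htwo⟩ := ends_eq_zero_of_sum_pips_eq _ _
    (fun v => by
      rw [valueCount, hsum]
      exact even_sum_tileCount_add_ends v _ hblk.1 hchain)
    hclosed (by rw [hsum, ← boardPips_eq_sum_pips, hpips])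
  exact ⟨ha, fun e he =>
    two_le_card_filter_zero_notMem_notMem he (fun t ht => hclosed t (.inl (ha ▸ ht))) htwo⟩

theorem playerTeam_natCast_add_two (i : ℕ) :
    playerTeam ((i + 2 : ℕ) : Fin 4) = playerTeam (i : Fin 4) := by
  push_cast
  generalize (i : Fin 4) = j
  revert j
  decide

theorem natCast_ne_natCast_add_two (i : ℕ) : (i : Fin 4) ≠ ((i + 2 : ℕ) : Fin 4) := by
  push_cast
  generalize (i : Fin 4) = j
  revert j
  decide

namespace Game

variable (g : Game)

theorem states_getElem_zero (h : 0 < g.states.length) :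
    g.states[0] = ⟨[], g.initHands, 0⟩ := by
  rw [List.getElem_zero, g.head_states]

theorem step (k : ℕ) (hk : k + 1 < g.states.length) : Step g.states[k] g.states[k + 1] :=
  List.isChain_iff_getElem.1 g.chain_states k hk

theorem states_induction {P : ℕ → GState → Prop} (h0 : P 0 ⟨[], g.initHands, 0⟩)
    (hstep : ∀ k (hk : k + 1 < g.states.length), P k g.states[k] → P (k + 1) g.states[k + 1]) :
    ∀ k (hk : k < g.states.length), P k g.states[k]
  | 0, hk => g.states_getElem_zero hk ▸ h0
  | k + 1, hk => hstep k hk (states_induction h0 hstep k (by omega))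

theorem turn_getElem : ∀ k (hk : k < g.states.length), g.states[k].turn = k :=
  g.states_induction (P := fun k s => s.turn = k) rfl fun k hk ih => by
    rw [(g.step k hk).turn_eq, ih, Nat.cast_succ]

theorem sum_initHands_val : ∑ j, (g.initHands j).val = (univ : Finset Tile).val := by
  ext t
  obtain ⟨i, hi⟩ := g.cover_initHands t
  rw [Multiset.count_sum', sum_eq_single i, Multiset.count_eq_one_of_mem (g.initHands i).nodup hi,
    Multiset.count_eq_one_of_mem univ.nodup (mem_univ t)]
  · exact fun j _ hji => Multiset.count_eq_zero.2
      (disjoint_left.1 (g.disj_initHands i j hji.symm) hi)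
  · exact fun h => absurd (mem_univ i) h

theorem conserved_getElem : ∀ k (hk : k < g.states.length), g.states[k].Conserved :=
  g.states_induction (P := fun _ s => s.Conserved)
    (by simp [GState.Conserved, tilesOf, sum_initHands_val]) fun k hk => (g.step k hk).conserved

theorem isChain_getElem :
    ∀ k (hk : k < g.states.length), g.states[k].board.IsChain fun p q => p.2 = q.1 :=
  g.states_induction (P := fun _ s => s.board.IsChain _) List.isChain_nil fun k hk =>
    (g.step k hk).isChain

theorem finalState_eq : g.finalState = g.states[g.states.length - 1]'(by
    have := List.length_pos_iff.2 g.states_ne; omega) :=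
  List.getLast_eq_getElem _

theorem conserved_finalState : g.finalState.Conserved :=
  g.finalState_eq ▸ g.conserved_getElem _ _

theorem isChain_finalState : g.finalState.board.IsChain fun p q => p.2 = q.1 :=
  g.finalState_eq ▸ g.isChain_getElem _ _

theorem teamPlays_false (h : 1 < g.states.length) : g.teamPlays false := by
  refine ⟨0, h, ?_, ?_⟩
  · show playerTeam g.states[0].turn = false
    rw [g.states_getElem_zero]
    rfl
  · show g.states[1].board ≠ g.states[0].board
    rw [g.states_getElem_zero]
    exact (g.step 0 h).board_ne_nil

variable {g} {tm : Bool}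

theorem hands_getElem_of_not_teamPlays (hnp : ¬ g.teamPlays tm) {j : Fin 4}
    (hj : playerTeam j = tm) :
    ∀ k (hk : k < g.states.length), g.states[k].hands j = g.initHands j :=
  g.states_induction (P := fun _ s => s.hands j = g.initHands j) rfl fun k hk ih => by
    rw [← ih]
    by_cases hjk : j = g.states[k].turn
    · have hb : g.states[k + 1].board = g.states[k].board := by
        by_contra hne
        exact hnp ⟨k, hk, hjk ▸ hj, hne⟩
      rw [((g.step k hk).pass_of_board_eq hb).1]
    · exact (g.step k hk).hands_of_ne_turn hjk

theorem not_canExtend_of_not_teamPlays (hnp : ¬ g.teamPlays tm) (hblk : g.EndsBlocked) (k : ℕ)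
    (hk : k < g.states.length) (hturn : playerTeam (k : Fin 4) = tm) :
    ∀ t ∈ g.initHands k, ¬ canExtend g.states[k].board t := by
  intro t ht
  rw [← g.hands_getElem_of_not_teamPlays hnp hturn k hk] at ht
  rcases Nat.lt_or_ge (k + 1) g.states.length with hk1 | hk1
  · have hb : g.states[k + 1].board = g.states[k].board := by
      by_contra hne
      exact hnp ⟨k, hk1, by rwa [List.get_eq_getElem, g.turn_getElem], hne⟩
    exact ((g.step k hk1).pass_of_board_eq hb).2 t (by rwa [g.turn_getElem])
  · obtain rfl : k = g.states.length - 1 := by omega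
    rw [Game.EndsBlocked, finalState_eq] at hblk
    exact hblk.2 _ t ht

theorem finalState_hands_of_not_teamPlays (hnp : ¬ g.teamPlays tm) {j : Fin 4}
    (hj : playerTeam j = tm) : g.finalState.hands j = g.initHands j :=
  g.finalState_eq ▸ hands_getElem_of_not_teamPlays hnp hj _ _

theorem head_eq_zero_of_minimal_block (hblk : g.EndsBlocked)
    (hmin : boardPips g.finalState.board = 42) :
    g.finalState.board.head!.1 = 0 ∧
      ∀ e, e ≠ 0 →
        2 ≤ #((tilesOf g.finalState.board).toFinset.filter fun t => 0 ∉ t ∧ e ∉ t) :=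
  g.conserved_finalState.head_eq_zero_of_minimal_block g.isChain_finalState hblk hmin

theorem exists_mem_initHands_of_not_teamPlays (hnp : ¬ g.teamPlays tm) (hblk : g.EndsBlocked)
    (hmin : boardPips g.finalState.board = 42) {j j' : Fin 4} (hj : playerTeam j = tm)
    (hj' : playerTeam j' = tm) (hjj' : j ≠ j') {e : Fin 7} (he : e ≠ 0) :
    ∃ t ∈ g.initHands j ∪ g.initHands j', e ∈ t := by
  by_contra! havoid
  obtain ⟨h0, htwo⟩ := head_eq_zero_of_minimal_block hblk hmin
  have hteam : ∀ t ∈ g.initHands j ∪ g.initHands j', ∃ k, t ∈ g.finalState.hands k := by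
    intro t ht
    rcases mem_union.1 ht with h | h
    exacts [⟨j, by rwa [finalState_hands_of_not_teamPlays hnp hj]⟩,
      ⟨j', by rwa [finalState_hands_of_not_teamPlays hnp hj']⟩]
  have hzero : ∀ t ∈ g.initHands j ∪ g.initHands j', 0 ∉ t ∧ e ∉ t := by
    intro t ht
    obtain ⟨k, htk⟩ := hteam t ht
    exact ⟨h0 ▸ (notMem_of_not_canExtend hblk.1 (hblk.2 k t htk)).1, havoid t ht⟩
  have hdisj :
      Disjoint (g.initHands j ∪ g.initHands j') (tilesOf g.finalState.board).toFinset := by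
    refine disjoint_left.2 fun t ht htP => ?_
    obtain ⟨k, htk⟩ := hteam t ht
    exact g.conserved_finalState.notMem_hands (List.mem_toFinset.1 htP) k htk
  have hcard := card_le_thirteen_of_disjoint he hzero hdisj (htwo e he)
  rw [card_union_of_disjoint (g.disj_initHands j j' hjj'), g.card_initHands,
    g.card_initHands] at hcard
  omega

theorem exists_end_avoided_of_pass (hnp : ¬ g.teamPlays tm) (hblk : g.EndsBlocked) {i : ℕ}
    (hi : i + 2 < g.states.length) (hteam : playerTeam (i : Fin 4) = tm)
    (hpass : g.states[i + 1].board = g.states[i].board) (hne : g.states[i].board ≠ []) :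
    ∃ e, (e = g.states[i].board.head!.1 ∨ e = g.states[i].board.getLast!.2) ∧
      ∀ t ∈ g.initHands i ∪ g.initHands (i + 2 : ℕ), e ∉ t := by
  have hP := g.not_canExtend_of_not_teamPlays hnp hblk i (by omega) hteam
  have hQ := g.not_canExtend_of_not_teamPlays hnp hblk (i + 2) hi
    (by rwa [playerTeam_natCast_add_two])
  have hstep := g.step (i + 1) hi
  have hP' := fun t ht => notMem_of_not_canExtend hne (hP t ht)
  have hQ' := fun t ht => notMem_of_not_canExtend hstep.board_ne_nil (hQ t ht)
  rcases hstep.ends_eq (hpass ▸ hne) with h | h <;> rw [h, hpass] at hQ'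
  · exact ⟨_, .inl rfl, fun t ht => (mem_union.1 ht).elim (hP' t · |>.1) (hQ' t · |>.1)⟩
  · exact ⟨_, .inr rfl, fun t ht => (mem_union.1 ht).elim (hP' t · |>.2) (hQ' t · |>.2)⟩

end Game

/-- In a minimal block (tranca mínima), if at some turn a player of the losing team
passes at a moment when the two open ends of the chain are two distinct nonzero
values, then the losing team plays at least one tile during the game. -/
theorem minimal_block_pass_two_nonzero_ends (g : Game) (tm : Bool)
    (hblocked : g.EndsBlocked)
    (hmin : boardPips g.finalState.board = 42)
    (hpass : ∃ (i : ℕ) (h : i + 1 < g.states.length),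
      playerTeam ((g.states.get ⟨i, by omega⟩).turn) = !tm ∧
      (g.states.get ⟨i + 1, h⟩).board = (g.states.get ⟨i, by omega⟩).board ∧
      (g.states.get ⟨i, by omega⟩).board ≠ [] ∧
      (g.states.get ⟨i, by omega⟩).board.head!.1 ≠ 0 ∧
      (g.states.get ⟨i, by omega⟩).board.getLast!.2 ≠ 0 ∧
      (g.states.get ⟨i, by omega⟩).board.head!.1 ≠
        (g.states.get ⟨i, by omega⟩).board.getLast!.2) :
    g.teamPlays (!tm) := by
  by_contra hnp
  obtain ⟨i, hi, hteam, hboard, hne, he, he', -⟩ := hpass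
  simp only [List.get_eq_getElem, g.turn_getElem] at hteam hboard hne he he'
  have htm : (!tm) = true := by
    by_contra h
    exact hnp (Bool.eq_false_iff.2 h ▸ g.teamPlays_false (by omega))
  rw [htm] at hnp hteam
  have hi2 : i + 2 < g.states.length := by
    by_contra hlast
    have h0 := (Game.head_eq_zero_of_minimal_block hblocked hmin).1
    rw [g.finalState_eq] at h0
    simp only [show g.states.length - 1 = i + 1 by omega, hboard] at h0
    exact he h0
  obtain ⟨e, hend, havoid⟩ := g.exists_end_avoided_of_pass hnp hblocked hi2 hteam hboard hne
  obtain ⟨t, ht, het⟩ := Game.exists_mem_initHands_of_not_teamPlays hnp hblocked hmin hteam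
    (by rwa [playerTeam_natCast_add_two]) (natCast_ne_natCast_add_two i)
    (show e ≠ 0 by rcases hend with rfl | rfl <;> assumption)
  exact havoid t ht het
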